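/- arXiv:2507.09522 — 6 statements merged into one kernel-verified Lean document; each statement's English description precedes it below -/
import Mathlib

section
/- Let U be a symmetric positive-semidefinite m×m real matrix whose eigenvalues all lie in [0,1], and let σ ≥ 1. Then I + (σ−1)U is invertible and for every d ∈ ℝ^m, ‖(I + (σ−1)U)⁻¹(I − U) d‖ ≥ ‖(I − U U†) d‖, where U† is the Moore–Penrose inverse of U. -/
open Matrix

/-!
`P := 1 - U U†` is the orthogonal projection onto `ker U`: the Penrose identities `U U† U = U`
and `(U U†)ᵀ = U U†` make it a symmetric idempotent with `P U = 0`. Hence `P` absorbs both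
`1 + (σ - 1) U` (so also its inverse) and `1 - U`, giving
`P ((1 + (σ - 1) U)⁻¹ (1 - U) d) = P d`, and an orthogonal projection does not increase the
Euclidean norm. Invertibility holds because `1 + (σ - 1) U` is positive definite.
-/

namespace Matrix

variable {n : Type*} [Fintype n]

theorem isUnit_one_add_smul_of_posSemidef [DecidableEq n] {U : Matrix n n ℝ}
    (hU : U.PosSemidef) {c : ℝ} (hc : 0 ≤ c) : IsUnit (1 + c • U) :=
  (PosDef.one.add_posSemidef (hU.smul hc)).isUnit

section Projection

variable [DecidableEq n] {R : Type*} [CommRing R] {U V : Matrix n n R}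

theorem one_sub_mul_mul_self_eq_zero (h : U * V * U = U) : (1 - U * V) * U = 0 := by
  rw [sub_mul, one_mul, h, sub_self]

theorem isIdempotentElem_one_sub_mul (h : U * V * U = U) : IsIdempotentElem (1 - U * V) :=
  IsIdempotentElem.one_sub (by rw [IsIdempotentElem, ← mul_assoc, h])

theorem mulVec_nonsing_inv_one_add_smul_mulVec_one_sub {P : Matrix n n R} (hPU : P * U = 0)
    {c : R} (hA : IsUnit (1 + c • U)) (d : n → R) :
    P *ᵥ ((1 + c • U)⁻¹ *ᵥ ((1 - U) *ᵥ d)) = P *ᵥ d := by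
  have hPA : P * (1 + c • U) = P := by
    rw [mul_add, mul_one, mul_smul_comm, hPU, smul_zero, add_zero]
  have hPAinv : P * (1 + c • U)⁻¹ = P := by
    conv_lhs => rw [← hPA]
    exact mul_nonsing_inv_cancel_right _ _ ((isUnit_iff_isUnit_det _).mp hA)
  have hPsub : P * (1 - U) = P := by rw [mul_sub, mul_one, hPU, sub_zero]
  rw [mulVec_mulVec, mulVec_mulVec, hPAinv, hPsub]

end Projection

section Contraction

variable {P : Matrix n n ℝ}

theorem mulVec_dotProduct_mulVec_self_of_isIdempotentElem (hP : IsIdempotentElem P)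
    (hPt : Pᵀ = P) (w : n → ℝ) : (P *ᵥ w) ⬝ᵥ (P *ᵥ w) = w ⬝ᵥ (P *ᵥ w) := by
  rw [dotProduct_mulVec, ← mulVec_transpose, hPt, mulVec_mulVec, hP.eq, dotProduct_comm]

theorem mulVec_dotProduct_mulVec_self_le_of_isIdempotentElem [DecidableEq n]
    (hP : IsIdempotentElem P) (hPt : Pᵀ = P) (w : n → ℝ) :
    (P *ᵥ w) ⬝ᵥ (P *ᵥ w) ≤ w ⬝ᵥ w := by
  -- `w ⬝ w - Pw ⬝ Pw = w ⬝ (1 - P) w = (1 - P) w ⬝ (1 - P) w ≥ 0`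
  have hQt : (1 - P)ᵀ = 1 - P := by rw [transpose_sub, transpose_one, hPt]
  have hcompl := mulVec_dotProduct_mulVec_self_of_isIdempotentElem hP.one_sub hQt w
  have hnonneg : 0 ≤ ((1 - P) *ᵥ w) ⬝ᵥ ((1 - P) *ᵥ w) := by
    simpa using dotProduct_self_star_nonneg ((1 - P) *ᵥ w)
  rw [mulVec_dotProduct_mulVec_self_of_isIdempotentElem hP hPt]
  rw [hcompl, sub_mulVec, one_mulVec, dotProduct_sub] at hnonneg
  linarith

end Contraction

end Matrix

theorem stmt1_general (m : ℕ) (U : Matrix (Fin m) (Fin m) ℝ)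
    (hUpsd : U.PosSemidef)
    (σ : ℝ) (hσ : 1 ≤ σ)
    (Upinv : Matrix (Fin m) (Fin m) ℝ)
    (hmp1 : U * Upinv * U = U)
    (hmp3 : (U * Upinv)ᵀ = U * Upinv) :
    IsUnit (1 + (σ - 1) • U) ∧
      ∀ d : Fin m → ℝ,
        Real.sqrt (∑ i, (((1 - U * Upinv) *ᵥ d) i) ^ 2) ≤
          Real.sqrt (∑ i, (((1 + (σ - 1) • U)⁻¹ *ᵥ ((1 - U) *ᵥ d)) i) ^ 2) := by
  have hA : IsUnit (1 + (σ - 1) • U) := isUnit_one_add_smul_of_posSemidef hUpsd (by linarith)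
  refine ⟨hA, fun d => Real.sqrt_le_sqrt ?_⟩
  have hPt : (1 - U * Upinv)ᵀ = 1 - U * Upinv := by rw [transpose_sub, transpose_one, hmp3]
  have hPd := mulVec_nonsing_inv_one_add_smul_mulVec_one_sub
    (one_sub_mul_mul_self_eq_zero hmp1) hA d
  have hsq (v : Fin m → ℝ) : ∑ i, v i ^ 2 = v ⬝ᵥ v := by simp only [dotProduct, sq]
  rw [hsq, hsq, ← hPd]
  exact mulVec_dotProduct_mulVec_self_le_of_isIdempotentElem
    (isIdempotentElem_one_sub_mul hmp1) hPt _

/-- If `U` is symmetric PSD with all eigenvalues in `[0,1]` and `σ ≥ 1`,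
then `I + (σ−1)U` is invertible and `‖(I + (σ−1)U)⁻¹(I − U) d‖ ≥ ‖(I − U U†) d‖`
for all `d`, where `U†` is the Moore–Penrose inverse of `U`. -/
theorem stmt1 (m : ℕ) (U : Matrix (Fin m) (Fin m) ℝ)
    (hUsym : Uᵀ = U) (hUpsd : U.PosSemidef)
    (hspec : ∀ μ ∈ spectrum ℝ U, μ ∈ Set.Icc (0 : ℝ) 1)
    (σ : ℝ) (hσ : 1 ≤ σ)
    (Upinv : Matrix (Fin m) (Fin m) ℝ)
    (hmp1 : U * Upinv * U = U) (hmp2 : Upinv * U * Upinv = Upinv)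
    (hmp3 : (U * Upinv)ᵀ = U * Upinv) (hmp4 : (Upinv * U)ᵀ = Upinv * U) :
    IsUnit (1 + (σ - 1) • U) ∧
      ∀ d : Fin m → ℝ,
        Real.sqrt (∑ i, (((1 - U * Upinv) *ᵥ d) i) ^ 2) ≤
          Real.sqrt (∑ i, (((1 + (σ - 1) • U)⁻¹ *ᵥ ((1 - U) *ᵥ d)) i) ^ 2) :=
  stmt1_general m U hUpsd σ hσ Upinv hmp1 hmp3
end

section
/- Let U be a symmetric positive-semidefinite m×m matrix with eigenvalues in [0,1] and let d ∈ ℝ^m. Then σ(I + (σ−1)U)⁻¹ U d tends to U U† d as σ → ∞. -/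
open Matrix Filter

/-- For symmetric PSD `U` with eigenvalues in `[0,1]` and `d ∈ ℝ^m`,
`σ(I + (σ−1)U)⁻¹ U d → U U† d` in the Euclidean norm as `σ → ∞`. -/
theorem stmt2 (m : ℕ) (U : Matrix (Fin m) (Fin m) ℝ)
    (hUsym : Uᵀ = U) (hUpsd : U.PosSemidef)
    (hspec : ∀ μ ∈ spectrum ℝ U, μ ∈ Set.Icc (0 : ℝ) 1)
    (Upinv : Matrix (Fin m) (Fin m) ℝ)
    (hmp1 : U * Upinv * U = U) (hmp2 : Upinv * U * Upinv = Upinv)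
    (hmp3 : (U * Upinv)ᵀ = U * Upinv) (hmp4 : (Upinv * U)ᵀ = Upinv * U)
    (d : Fin m → ℝ) :
    Tendsto (fun σ : ℝ =>
        Real.sqrt (∑ i,
          ((σ • ((1 + (σ - 1) • U)⁻¹ *ᵥ (U *ᵥ d)) - (U * Upinv) *ᵥ d :
              Fin m → ℝ) i) ^ 2))
      atTop (nhds 0) := by
  classical
  have hU : U.IsHermitian := hUpsd.1
  set V : Matrix (Fin m) (Fin m) ℝ := (hU.eigenvectorUnitary : Matrix (Fin m) (Fin m) ℝ) with hVdef
  set W : Matrix (Fin m) (Fin m) ℝ := star V with hWdef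
  have hVW : V * W = 1 := Unitary.mul_star_self_of_mem hU.eigenvectorUnitary.2
  have hWV : W * V = 1 := Unitary.star_mul_self_of_mem hU.eigenvectorUnitary.2
  set μ : Fin m → ℝ := hU.eigenvalues with hμdef
  have hμ0 : ∀ k, 0 ≤ μ k := fun k => hUpsd.eigenvalues_nonneg k
  set D : (Fin m → ℝ) → Matrix (Fin m) (Fin m) ℝ := fun e => V * diagonal e * W with hDdef
  have hDmul : ∀ e f, D e * D f = D (fun k => e k * f k) := by
    intro e f
    simp only [hDdef, Matrix.mul_assoc]
    rw [← Matrix.mul_assoc W V, hWV, Matrix.one_mul, ← Matrix.mul_assoc (diagonal e),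
      diagonal_mul_diagonal]
  have hDone : D (fun _ => 1) = 1 := by
    have h : diagonal (fun _ : Fin m => (1:ℝ)) = 1 := diagonal_one
    simp only [hDdef, h, Matrix.mul_one, hVW]
  have hDadd : ∀ e f, D e + D f = D (fun k => e k + f k) := by
    intro e f
    simp only [hDdef]
    rw [← Matrix.add_mul, ← Matrix.mul_add, diagonal_add]
  have hDsub : ∀ e f, D e - D f = D (fun k => e k - f k) := by
    intro e f
    simp only [hDdef]
    rw [← Matrix.sub_mul, ← Matrix.mul_sub, diagonal_sub]
  have hDsmul : ∀ (r : ℝ) e, r • D e = D (fun k => r * e k) := by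
    intro r e
    simp only [hDdef]
    rw [← Matrix.smul_mul, ← Matrix.mul_smul, ← diagonal_smul]
    rfl
  have hUD : U = D μ := by
    have h := hU.spectral_theorem
    rw [RCLike.ofReal_real_eq_id] at h
    simpa [hDdef, hVdef, hWdef] using h
  set P : Matrix (Fin m) (Fin m) ℝ := U * Upinv with hPdef
  have hUP : U * P = U := by
    have h := congrArg Matrix.transpose hmp1
    rw [transpose_mul, hmp3, hUsym] at h
    exact h
  have hAdiag : ∀ σ : ℝ, (1 + (σ - 1) • U : Matrix (Fin m) (Fin m) ℝ)
      = D (fun k => 1 + (σ - 1) * μ k) := by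
    intro σ
    rw [hUD, ← hDone, hDsmul, hDadd]
  have hmain : ∀ σ : ℝ, 1 < σ →
      (σ • ((1 + (σ - 1) • U)⁻¹ *ᵥ (U *ᵥ d)) - P *ᵥ d : Fin m → ℝ)
        = V *ᵥ (fun k => ((1 + (σ-1) * μ k)⁻¹ * (μ k * μ k - μ k))
            * ((W *ᵥ (Upinv *ᵥ d)) k)) := by
    intro σ hσ
    set a : Fin m → ℝ := fun k => 1 + (σ - 1) * μ k with hadef
    have ha0 : ∀ k, a k ≠ 0 := by
      intro k
      have : (0:ℝ) < 1 + (σ - 1) * μ k := by nlinarith [hμ0 k]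
      exact ne_of_gt this
    set A : Matrix (Fin m) (Fin m) ℝ := 1 + (σ - 1) • U with hAdef
    have hA : A = D a := hAdiag σ
    have hAinvmul : A * D (fun k => (a k)⁻¹) = 1 := by
      rw [hA, hDmul]
      have h : (fun k => a k * (a k)⁻¹) = fun _ : Fin m => (1:ℝ) :=
        funext fun k => mul_inv_cancel₀ (ha0 k)
      rw [h, hDone]
    have hAinv : A⁻¹ = D (fun k => (a k)⁻¹) := inv_eq_right_inv hAinvmul
    have hAinvA : A⁻¹ * A = 1 := by
      rw [hAinv, hA, hDmul]
      have h : (fun k => (a k)⁻¹ * a k) = fun _ : Fin m => (1:ℝ) :=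
        funext fun k => inv_mul_cancel₀ (ha0 k)
      rw [h, hDone]
    have hAP : A * P = P + (σ - 1) • U := by
      rw [hAdef, Matrix.add_mul, Matrix.one_mul, Matrix.smul_mul, hUP]
    have key : σ • (A⁻¹ * U) - P = A⁻¹ * (U - P) := by
      have h1 : A⁻¹ * (σ • U - A * P) = σ • (A⁻¹ * U) - A⁻¹ * (A * P) := by
        rw [Matrix.mul_sub, Matrix.mul_smul]
      have h2 : A⁻¹ * (A * P) = P := by rw [← Matrix.mul_assoc, hAinvA, Matrix.one_mul]
      have h4 : σ • U - (σ - 1) • U = U := by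
        rw [← sub_smul]; norm_num
      have h3 : σ • U - A * P = U - P := by
        rw [hAP, sub_add_eq_sub_sub, sub_right_comm, h4]
      rw [← h3, h1, h2]
    have hUP2 : U - P = (U * U - U) * Upinv := by
      rw [Matrix.sub_mul, Matrix.mul_assoc, ← hPdef, hUP, hPdef]
    have hM : A⁻¹ * (U * U - U) = D (fun k => (a k)⁻¹ * (μ k * μ k - μ k)) := by
      rw [hAinv, hUD, hDmul, hDsub, hDmul]
    have hfinal : σ • (A⁻¹ * U) - P = D (fun k => (a k)⁻¹ * (μ k * μ k - μ k)) * Upinv := by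
      rw [key, hUP2, ← Matrix.mul_assoc, hM]
    have hvec : σ • (A⁻¹ *ᵥ (U *ᵥ d)) - P *ᵥ d = (σ • (A⁻¹ * U) - P) *ᵥ d := by
      rw [Matrix.sub_mulVec, Matrix.smul_mulVec, mulVec_mulVec]
    have hDvec : ∀ e : Fin m → ℝ, (D e * Upinv) *ᵥ d
        = V *ᵥ (fun k => e k * ((W *ᵥ (Upinv *ᵥ d)) k)) := by
      intro e
      have h3 : diagonal e *ᵥ (W *ᵥ (Upinv *ᵥ d))
          = fun k => e k * ((W *ᵥ (Upinv *ᵥ d)) k) := by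
        funext k
        exact mulVec_diagonal _ _ _
      rw [hDdef]
      simp only []
      rw [← h3]
      simp only [mulVec_mulVec, Matrix.mul_assoc]
    rw [hvec, hfinal, hDvec]
  set c : Fin m → ℝ := W *ᵥ (Upinv *ᵥ d) with hcdef
  have hlim : ∀ k, Tendsto (fun σ : ℝ => (1 + (σ-1) * μ k)⁻¹ * (μ k * μ k - μ k))
      atTop (nhds 0) := by
    intro k
    rcases eq_or_lt_of_le (hμ0 k) with h | h
    · have he : (fun σ : ℝ => (1 + (σ-1) * μ k)⁻¹ * (μ k * μ k - μ k)) = fun _ => 0 := by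
        funext σ; rw [← h]; ring
      rw [he]; exact tendsto_const_nhds
    · have hden : Tendsto (fun σ : ℝ => 1 + (σ-1) * μ k) atTop atTop := by
        apply tendsto_atTop_add_const_left
        exact (tendsto_atTop_add_const_right atTop (-1) tendsto_id).atTop_mul_const h
      have hinv := hden.inv_tendsto_atTop
      have := hinv.mul_const (μ k * μ k - μ k)
      simpa using this
  have hcomp : ∀ i, Tendsto (fun σ : ℝ =>
      (V *ᵥ (fun k => ((1 + (σ-1) * μ k)⁻¹ * (μ k * μ k - μ k)) * c k)) i) atTop (nhds 0) := by
    intro i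
    have hrw : ∀ σ : ℝ, (V *ᵥ (fun k => ((1 + (σ-1) * μ k)⁻¹ * (μ k * μ k - μ k)) * c k)) i
        = ∑ k, V i k * (((1 + (σ-1) * μ k)⁻¹ * (μ k * μ k - μ k)) * c k) := fun σ => rfl
    simp only [hrw]
    have h0 : (0:ℝ) = ∑ _k : Fin m, 0 := by simp
    rw [h0]
    apply tendsto_finset_sum
    intro k _
    have := ((hlim k).mul_const (c k)).const_mul (V i k)
    simpa using this
  have hsq : Tendsto (fun σ : ℝ => ∑ i,
      ((V *ᵥ (fun k => ((1 + (σ-1) * μ k)⁻¹ * (μ k * μ k - μ k)) * c k)) i)^2)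
      atTop (nhds 0) := by
    have h0 : (0:ℝ) = ∑ _i : Fin m, 0 := by simp
    rw [h0]
    apply tendsto_finset_sum
    intro i _
    simpa using ((hcomp i).pow 2)
  have hsqrt := (Real.continuous_sqrt.tendsto 0).comp hsq
  rw [Real.sqrt_zero] at hsqrt
  apply Tendsto.congr' _ hsqrt
  filter_upwards [eventually_gt_atTop (1:ℝ)] with σ hσ
  rw [hmain σ hσ]
  rfl
end

section
/- Let l: ℝ^m → ℝ be a lower semicontinuous function that is positively homogeneous of degree two (i.e., l(t d) = t² l(d) for all t > 0 and d), and let M: ℝ^m → ℝ^n be a linear map. If there is κ̄ > 0 such that l(d) ≥ κ̄‖d‖² for every d with M d = 0, then there exist κ ∈ (0, κ̄] and c > 0 such that l(d) + c‖M d‖² ≥ κ‖d‖² for all d ∈ ℝ^m. -/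
open Filter Topology

/-- If `l` is lsc and positively homogeneous of degree two, `M` linear,
and `l(d) ≥ κ̄‖d‖²` whenever `M d = 0`, then there are `κ ∈ (0, κ̄]` and `c > 0` with
`l(d) + c‖M d‖² ≥ κ‖d‖²` for all `d`. -/
theorem stmt3 (m n : ℕ) (l : EuclideanSpace ℝ (Fin m) → ℝ)
    (hlsc : LowerSemicontinuous l)
    (hhom : ∀ t : ℝ, 0 < t → ∀ d, l (t • d) = t ^ 2 * l d)
    (M : EuclideanSpace ℝ (Fin m) →ₗ[ℝ] EuclideanSpace ℝ (Fin n))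
    (κb : ℝ) (hκb : 0 < κb)
    (h : ∀ d, M d = 0 → κb * ‖d‖ ^ 2 ≤ l d) :
    ∃ κ c : ℝ, 0 < κ ∧ κ ≤ κb ∧ 0 < c ∧
      ∀ d, κ * ‖d‖ ^ 2 ≤ l d + c * ‖M d‖ ^ 2 := by
  by_contra hc
  push_neg at hc
  set κ : ℝ := κb / 2 with hκ
  have hκpos : 0 < κ := by positivity
  have hl0 : l 0 = 0 := by
    have := hhom 2 (by norm_num) 0
    simp at this
    linarith
  -- witnesses for c = k+1
  have hw : ∀ k : ℕ, ∃ d, l d + (k + 1 : ℝ) * ‖M d‖ ^ 2 < κ * ‖d‖ ^ 2 := by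
    intro k
    obtain ⟨d, hd⟩ := hc κ (k + 1 : ℝ) hκpos (by linarith) (by positivity)
    exact ⟨d, by linarith⟩
  choose D hD using hw
  have hDne : ∀ k, D k ≠ 0 := by
    intro k hk0
    have := hD k
    rw [hk0] at this
    simp [hl0] at this
  -- normalized witnesses
  set E : ℕ → EuclideanSpace ℝ (Fin m) := fun k => ‖D k‖⁻¹ • D k with hE
  have hEnorm : ∀ k, ‖E k‖ = 1 := by
    intro k
    have hpos : 0 < ‖D k‖ := norm_pos_iff.mpr (hDne k)
    simp [hE, norm_smul, abs_of_pos (inv_pos.mpr hpos), inv_mul_cancel₀ hpos.ne']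
  have hEineq : ∀ k, l (E k) + (k + 1 : ℝ) * ‖M (E k)‖ ^ 2 < κ := by
    intro k
    have hpos : 0 < ‖D k‖ := norm_pos_iff.mpr (hDne k)
    have hinv : ‖D k‖⁻¹ * ‖D k‖ = 1 := inv_mul_cancel₀ hpos.ne'
    have e1 : l (E k) = (‖D k‖⁻¹) ^ 2 * l (D k) := hhom _ (inv_pos.mpr hpos) _
    have e2 : ‖M (E k)‖ = ‖D k‖⁻¹ * ‖M (D k)‖ := by
      rw [hE]
      simp [map_smul, norm_smul, abs_of_pos (inv_pos.mpr hpos)]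
    have hinv2 : ‖D k‖⁻¹ ^ 2 * ‖D k‖ ^ 2 = 1 := by
      rw [← mul_pow, hinv, one_pow]
    rw [e1, e2, mul_pow]
    have hlt := mul_lt_mul_of_pos_left (hD k) (by positivity : (0:ℝ) < (‖D k‖⁻¹) ^ 2)
    have hrhs : ‖D k‖⁻¹ ^ 2 * (κ * ‖D k‖ ^ 2) = κ := by
      rw [show ‖D k‖⁻¹ ^ 2 * (κ * ‖D k‖ ^ 2) = κ * (‖D k‖⁻¹ ^ 2 * ‖D k‖ ^ 2) by ring, hinv2, mul_one]
    rw [hrhs] at hlt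
    nlinarith [hlt]
  -- compactness: convergent subsequence on the sphere
  have hsph : IsCompact (Metric.sphere (0 : EuclideanSpace ℝ (Fin m)) 1) :=
    isCompact_sphere 0 1
  have hmem : ∀ k, E k ∈ Metric.sphere (0 : EuclideanSpace ℝ (Fin m)) 1 := by
    intro k; simp [hEnorm k]
  obtain ⟨e, hesph, φ, hφ, htend⟩ := hsph.tendsto_subseq hmem
  have henorm : ‖e‖ = 1 := by simpa using hesph
  -- eventual lower bound on l along the subsequence
  have hev : ∀ᶠ k in atTop, l e - 1 < l (E (φ k)) :=
    htend.eventually (hlsc e (l e - 1) (by linarith))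
  set C : ℝ := κ - (l e - 1) with hC
  have hbound : ∀ᶠ k in atTop, ‖M (E (φ k))‖ ^ 2 ≤ C / (k + 1 : ℝ) := by
    filter_upwards [hev] with k hk
    have h1 := hEineq (φ k)
    have h2 : (φ k + 1 : ℝ) * ‖M (E (φ k))‖ ^ 2 ≤ C := by nlinarith
    have hkpos : (0:ℝ) < (k + 1 : ℝ) := by positivity
    have hφk : (k : ℝ) + 1 ≤ (φ k : ℝ) + 1 := by
      have hkk : k ≤ φ k := hφ.le_apply
      have : (k : ℝ) ≤ (φ k : ℝ) := by exact_mod_cast hkk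
      linarith
    have hφkpos : (0:ℝ) < (φ k + 1 : ℝ) := by positivity
    rw [le_div_iff₀ hkpos]
    nlinarith [sq_nonneg ‖M (E (φ k))‖]
  have hCtend : Tendsto (fun k : ℕ => C / (k + 1 : ℝ)) atTop (𝓝 0) := by
    apply Tendsto.div_atTop (tendsto_const_nhds)
    exact tendsto_atTop_add_const_right _ 1 tendsto_natCast_atTop_atTop
  have hsqtend : Tendsto (fun k => ‖M (E (φ k))‖ ^ 2) atTop (𝓝 0) :=
    squeeze_zero' (Eventually.of_forall fun k => by positivity) hbound hCtend
  have hntend : Tendsto (fun k => ‖M (E (φ k))‖) atTop (𝓝 0) := by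
    have := (Real.continuous_sqrt.tendsto 0).comp hsqtend
    simpa [Function.comp_def, Real.sqrt_sq (norm_nonneg _)] using this
  have hMtend0 : Tendsto (fun k => M (E (φ k))) atTop (𝓝 0) :=
    tendsto_zero_iff_norm_tendsto_zero.mpr hntend
  have hMcont : Continuous M := M.continuous_of_finiteDimensional
  have hMtend : Tendsto (fun k => M (E (φ k))) atTop (𝓝 (M e)) :=
    (hMcont.tendsto e).comp htend
  have hMe : M e = 0 := tendsto_nhds_unique hMtend hMtend0
  have hle : κb ≤ l e := by
    have := h e hMe
    rwa [henorm, one_pow, mul_one] at this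
  -- final contradiction via lsc at e with level κ < l e
  have hev2 : ∀ᶠ k in atTop, κ < l (E (φ k)) :=
    htend.eventually (hlsc e κ (by rw [hκ] at *; linarith))
  obtain ⟨k, hk⟩ := hev2.exists
  have h1 := hEineq (φ k)
  nlinarith [sq_nonneg ‖M (E (φ k))‖, hk, h1]
end

section
/- Let r: ℝ^m → ℝ ∪ {∞} be a proper lsc convex function, x̄ ∈ dom r, ū ∈ ∂r(x̄), and v, d ∈ ℝ^m. Then the pair (v+d, v) belongs to the tangent cone of the graph of Prox_r at (x̄+ū, x̄) if and only if the pair (v, d) belongs to the tangent cone of the graph of ∂r at (x̄, ū). -/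
open Filter

noncomputable section

/-- Bouligand tangent cone to a set `C` at a point `x`. -/
def tangentConeB {X : Type*} [NormedAddCommGroup X] [NormedSpace ℝ X]
    (C : Set X) (x : X) : Set X :=
  {w | ∃ t : ℕ → ℝ, ∃ c : ℕ → X, (∀ k, 0 < t k) ∧ Tendsto t atTop (nhds 0) ∧
    (∀ k, c k ∈ C) ∧ Tendsto (fun k => (t k)⁻¹ • (c k - x)) atTop (nhds w)}

/-- Convex subdifferential of an extended-real-valued function. -/
def subdiffFn {m : ℕ} (r : EuclideanSpace ℝ (Fin m) → EReal)
    (x : EuclideanSpace ℝ (Fin m)) : Set (EuclideanSpace ℝ (Fin m)) :=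
  {u | ∀ y, r x + (((inner ℝ u (y - x) : ℝ)) : EReal) ≤ r y}

/-!
The graph of `Prox_r = (I + ∂r)⁻¹` is the image of the graph of `∂r` under the linear
isomorphism `(x, u) ↦ (x + u, x)`, and Bouligand tangent cones are transported by linear
isomorphisms.
-/

section TangentCone

variable {X Y : Type*} [NormedAddCommGroup X] [NormedSpace ℝ X]
  [NormedAddCommGroup Y] [NormedSpace ℝ Y]

theorem map_mem_tangentConeB (L : X →L[ℝ] Y) {C : Set X} {D : Set Y} (hCD : Set.MapsTo L C D)
    {x w : X} (hw : w ∈ tangentConeB C x) : L w ∈ tangentConeB D (L x) := by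
  obtain ⟨t, c, ht, ht0, hc, hlim⟩ := hw
  refine ⟨t, fun k => L (c k), ht, ht0, fun k => hCD (hc k), ?_⟩
  simpa only [Function.comp_def, map_smul, map_sub] using (L.continuous.tendsto w).comp hlim

theorem mem_tangentConeB_preimage_iff (L : X ≃L[ℝ] Y) {D : Set Y} {x w : X} :
    w ∈ tangentConeB (L ⁻¹' D) x ↔ L w ∈ tangentConeB D (L x) := by
  refine ⟨map_mem_tangentConeB (L : X →L[ℝ] Y) (Set.mapsTo_preimage L D), fun hw => ?_⟩
  have hD : Set.MapsTo L.symm D (L ⁻¹' D) := fun y hy => by simpa using hy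
  simpa using map_mem_tangentConeB (L.symm : Y →L[ℝ] X) hD hw

end TangentCone

def resolventGraphEquiv (E : Type*) [NormedAddCommGroup E] [NormedSpace ℝ E] :
    (E × E) ≃L[ℝ] (E × E) :=
  ContinuousLinearEquiv.equivOfInverse
    ((ContinuousLinearMap.snd ℝ E E).prod
      (ContinuousLinearMap.fst ℝ E E - ContinuousLinearMap.snd ℝ E E))
    ((ContinuousLinearMap.fst ℝ E E + ContinuousLinearMap.snd ℝ E E).prod
      (ContinuousLinearMap.fst ℝ E E))
    (fun p => by simp) (fun p => by simp)

@[simp]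
theorem resolventGraphEquiv_apply {E : Type*} [NormedAddCommGroup E] [NormedSpace ℝ E]
    (p : E × E) : resolventGraphEquiv E p = (p.2, p.1 - p.2) :=
  rfl

theorem stmt7_general (m : ℕ) (r : EuclideanSpace ℝ (Fin m) → EReal)
    (xb ub : EuclideanSpace ℝ (Fin m))
    (v d : EuclideanSpace ℝ (Fin m)) :
    (v + d, v) ∈ tangentConeB
        {p : EuclideanSpace ℝ (Fin m) × EuclideanSpace ℝ (Fin m) |
          p.1 - p.2 ∈ subdiffFn r p.2} (xb + ub, xb) ↔
      (v, d) ∈ tangentConeB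
        {p : EuclideanSpace ℝ (Fin m) × EuclideanSpace ℝ (Fin m) |
          p.2 ∈ subdiffFn r p.1} (xb, ub) := by
  simpa using mem_tangentConeB_preimage_iff (resolventGraphEquiv (EuclideanSpace ℝ (Fin m)))
    (D := {p | p.2 ∈ subdiffFn r p.1}) (x := (xb + ub, xb)) (w := (v + d, v))

/-- For proper lsc convex `r`, `x̄ ∈ dom r`, `ū ∈ ∂r(x̄)`:
`(v+d, v)` lies in the tangent cone to `gph Prox_r = gph (I+∂r)⁻¹` at `(x̄+ū, x̄)`
iff `(v, d)` lies in the tangent cone to `gph ∂r` at `(x̄, ū)`. -/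
theorem stmt7 (m : ℕ) (r : EuclideanSpace ℝ (Fin m) → EReal)
    (hproper : (∃ x, r x ≠ ⊤) ∧ ∀ x, r x ≠ ⊥)
    (hlsc : LowerSemicontinuous r)
    (hconv : ∀ x y : EuclideanSpace ℝ (Fin m), ∀ a b : ℝ, 0 ≤ a → 0 ≤ b → a + b = 1 →
      r (a • x + b • y) ≤ (a : EReal) * r x + (b : EReal) * r y)
    (xb ub : EuclideanSpace ℝ (Fin m)) (hdom : r xb ≠ ⊤) (hub : ub ∈ subdiffFn r xb)
    (v d : EuclideanSpace ℝ (Fin m)) :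
    (v + d, v) ∈ tangentConeB
        {p : EuclideanSpace ℝ (Fin m) × EuclideanSpace ℝ (Fin m) |
          p.1 - p.2 ∈ subdiffFn r p.2} (xb + ub, xb) ↔
      (v, d) ∈ tangentConeB
        {p : EuclideanSpace ℝ (Fin m) × EuclideanSpace ℝ (Fin m) |
          p.2 ∈ subdiffFn r p.1} (xb, ub) :=
  stmt7_general m r xb ub v d
end
end

section
/- Let p ≤ q be positive integers, A ∈ ℝ^{p×q} with singular value decomposition A = R [Σ 0] Sᵀ, Σ = Diag(σ₁,…,σ_p), σ₁ ≥ … ≥ σ_p ≥ 0, and h(t) = max{t−1,0}. Then the proximal mapping of the nuclear norm ‖·‖_* at A equals Prox_{‖·‖_*}(A) = R [Σ_h 0] Sᵀ, where Σ_h = Diag(h(σ₁),…,h(σ_p)); that is, R [Σ_h 0] Sᵀ is the unique minimizer of Y ↦ ‖Y‖_* + ½‖Y − A‖_F². -/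
/-!
Put `h i = max (σ i - 1) 0`, `Y₀ = R [Σ_h 0] Sᵀ` and `g = σ - h = min σ 1`, so that
`G = A - Y₀ = R [Σ_g 0] Sᵀ` with `0 ≤ g ≤ 1`. Such a `G` is a contraction, hence
`⟪Y, G⟫ ≤ ‖Y‖_*` for every `Y` (Cauchy–Schwarz row by row in an orthonormal eigenbasis of `Y Yᵀ`),
with equality at `Y₀` because `h i * g i = h i`. Thus `G` is a subgradient of `‖·‖_*` at `Y₀`, and
expanding `½‖Y - A‖²` around `Y₀` gives
`‖Y‖_* + ½‖Y - A‖² ≥ ‖Y₀‖_* + ½‖Y₀ - A‖² + ½‖Y - Y₀‖²`.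
-/

open Matrix

noncomputable section

/-- Nuclear norm of a real `p × q` matrix: the sum of its singular values, i.e.
the sum of the square roots of the eigenvalues of `A Aᵀ`. -/
def nuclearNorm {p q : ℕ} (A : Matrix (Fin p) (Fin q) ℝ) : ℝ :=
  ∑ i, Real.sqrt ((Matrix.isHermitian_mul_conjTranspose_self A).eigenvalues i)

def frobNorm {p q : ℕ} (A : Matrix (Fin p) (Fin q) ℝ) : ℝ :=
  Real.sqrt (∑ i, ∑ j, (A i j) ^ 2)

theorem Matrix.trace_eq_sum_dotProduct_mulVec {n R : Type*} [Fintype n] [DecidableEq n]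
    [CommRing R] {U : Matrix n n R} (hU : U * Uᵀ = 1) (M : Matrix n n R) :
    trace M = ∑ k, Uᵀ k ⬝ᵥ (M *ᵥ Uᵀ k) := by
  calc trace M = trace (Uᵀ * M * U) := by
        rw [mul_assoc, trace_mul_comm, mul_assoc, hU, mul_one]
    _ = _ := by
        simp only [trace, diag, mul_apply, dotProduct, mulVec, transpose_apply,
          Finset.sum_mul, Finset.mul_sum]
        refine Finset.sum_congr rfl fun k _ => Finset.sum_comm.trans ?_
        simp only [mul_comm, mul_left_comm]

theorem dotProduct_le_sqrt_mul_sqrt {n : Type*} [Fintype n] (x y : n → ℝ) :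
    x ⬝ᵥ y ≤ √(x ⬝ᵥ x) * √(y ⬝ᵥ y) := by
  simpa only [dotProduct, sq] using Real.sum_mul_le_sqrt_mul_sqrt Finset.univ x y

theorem Matrix.dotProduct_mul_transpose_mulVec {m n R : Type*} [Fintype m] [Fintype n]
    [CommSemiring R] (Y G : Matrix m n R) (x : m → R) :
    x ⬝ᵥ ((Y * Gᵀ) *ᵥ x) = (Yᵀ *ᵥ x) ⬝ᵥ (Gᵀ *ᵥ x) := by
  rw [← mulVec_mulVec, dotProduct_mulVec, mulVec_transpose, mulVec_transpose]

theorem Matrix.trace_sub_mul_transpose_sub {m n R : Type*} [Fintype m] [Fintype n] [CommRing R]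
    (X Z : Matrix m n R) :
    trace ((X - Z) * (X - Z)ᵀ) = trace (X * Xᵀ) - 2 * trace (X * Zᵀ) + trace (Z * Zᵀ) := by
  have hsymm : trace (Z * Xᵀ) = trace (X * Zᵀ) := by
    rw [← trace_transpose, transpose_mul, transpose_transpose]
  rw [transpose_sub, Matrix.sub_mul, Matrix.mul_sub, Matrix.mul_sub, trace_sub, trace_sub,
    trace_sub, hsymm]
  ring

theorem Polynomial.roots_prod_univ_X_sub_C {n R : Type*} [Fintype n] [CommRing R] [IsDomain R]
    (e : n → R) :
    (∏ i, (X - C (e i))).roots = Finset.univ.val.map e := by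
  rw [roots_prod _ _ (Finset.prod_ne_zero_iff.mpr fun i _ => X_sub_C_ne_zero (e i))]
  simp

namespace Matrix.IsHermitian

variable {n : Type*} [Fintype n] [DecidableEq n] {M : Matrix n n ℝ} (hM : M.IsHermitian)

theorem eigenvectorUnitary_mul_transpose :
    (hM.eigenvectorUnitary : Matrix n n ℝ) * (hM.eigenvectorUnitary : Matrix n n ℝ)ᵀ = 1 := by
  simpa [star_eq_conjTranspose, conjTranspose_eq_transpose_of_trivial] using
    Unitary.mul_star_self_of_mem hM.eigenvectorUnitary.2

theorem dotProduct_self_eigenvectorBasis (k : n) :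
    ⇑(hM.eigenvectorBasis k) ⬝ᵥ ⇑(hM.eigenvectorBasis k) = 1 := by
  have h := real_inner_self_eq_norm_sq (hM.eigenvectorBasis k)
  rw [hM.eigenvectorBasis.orthonormal.1 k, EuclideanSpace.inner_eq_star_dotProduct] at h
  simpa using h

theorem dotProduct_mulVec_eigenvectorBasis (k : n) :
    ⇑(hM.eigenvectorBasis k) ⬝ᵥ (M *ᵥ ⇑(hM.eigenvectorBasis k)) = hM.eigenvalues k := by
  rw [hM.mulVec_eigenvectorBasis, dotProduct_smul, hM.dotProduct_self_eigenvectorBasis]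
  simp

theorem sum_comp_eigenvalues_of_eq_conj_diagonal {R : Matrix n n ℝ} (hR : Rᵀ * R = 1)
    {d : n → ℝ} (hMd : M = R * diagonal d * Rᵀ) (f : ℝ → ℝ) :
    ∑ i, f (hM.eigenvalues i) = ∑ i, f (d i) := by
  have hcharpoly : M.charpoly = (diagonal d).charpoly := by
    rw [hMd, mul_assoc, charpoly_mul_comm, mul_assoc, hR, mul_one]
  rw [hM.charpoly_eq, charpoly_diagonal] at hcharpoly
  have hroots := congrArg Polynomial.roots hcharpoly
  rw [Polynomial.roots_prod_univ_X_sub_C, Polynomial.roots_prod_univ_X_sub_C] at hroots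
  simpa [Multiset.map_map] using congrArg (fun s => (s.map f).sum) hroots

end Matrix.IsHermitian

theorem trace_mul_transpose_le_nuclearNorm {p q : ℕ} {G : Matrix (Fin p) (Fin q) ℝ}
    (hG : ∀ x, (Gᵀ *ᵥ x) ⬝ᵥ (Gᵀ *ᵥ x) ≤ x ⬝ᵥ x) (Y : Matrix (Fin p) (Fin q) ℝ) :
    trace (Y * Gᵀ) ≤ nuclearNorm Y := by
  have hM := isHermitian_mul_conjTranspose_self Y
  set b := fun k => ⇑(hM.eigenvectorBasis k)
  have hYb (k) : (Yᵀ *ᵥ b k) ⬝ᵥ (Yᵀ *ᵥ b k) = hM.eigenvalues k := by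
    rw [← dotProduct_mul_transpose_mulVec, ← conjTranspose_eq_transpose_of_trivial]
    exact hM.dotProduct_mulVec_eigenvectorBasis k
  have hGb (k) : √((Gᵀ *ᵥ b k) ⬝ᵥ (Gᵀ *ᵥ b k)) ≤ 1 := by
    rw [Real.sqrt_le_one, ← hM.dotProduct_self_eigenvectorBasis k]
    exact hG _
  calc trace (Y * Gᵀ) = ∑ k, (Yᵀ *ᵥ b k) ⬝ᵥ (Gᵀ *ᵥ b k) := by
        simp only [trace_eq_sum_dotProduct_mulVec hM.eigenvectorUnitary_mul_transpose,
          IsHermitian.eigenvectorUnitary_transpose_apply, dotProduct_mul_transpose_mulVec, b]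
    _ ≤ ∑ k, √(hM.eigenvalues k) * √((Gᵀ *ᵥ b k) ⬝ᵥ (Gᵀ *ᵥ b k)) :=
        Finset.sum_le_sum fun k _ => hYb k ▸ dotProduct_le_sqrt_mul_sqrt _ _
    _ ≤ nuclearNorm Y :=
        Finset.sum_le_sum fun k _ =>
          mul_le_of_le_one_right (Real.sqrt_nonneg _) (hGb k)

def rectDiagonal {p : ℕ} (q : ℕ) (v : Fin p → ℝ) : Matrix (Fin p) (Fin q) ℝ :=
  of fun i j => if (i : ℕ) = j then v i else 0

section rectDiagonal

variable {p q : ℕ}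

theorem rectDiagonal_sub (v w : Fin p → ℝ) :
    rectDiagonal q v - rectDiagonal q w = rectDiagonal q (v - w) := by
  ext i j
  by_cases h : (i : ℕ) = j <;> simp [rectDiagonal, h]

theorem rectDiagonal_mul_transpose (hpq : p ≤ q) (v w : Fin p → ℝ) :
    rectDiagonal q v * (rectDiagonal q w)ᵀ = diagonal (v * w) := by
  ext i j
  have hcoe (i : Fin p) (k : Fin q) : (i : ℕ) = k ↔ k = Fin.castLE hpq i := by
    rw [Fin.ext_iff, Fin.val_castLE, eq_comm]
  rw [mul_apply]
  simp only [rectDiagonal, transpose_apply, of_apply, hcoe, ite_mul, zero_mul, mul_ite, mul_zero,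
    Finset.sum_ite_eq', Finset.mem_univ, if_true]
  by_cases h : i = j
  · subst h; simp
  · simp [h, Ne.symm h]

theorem conj_rectDiagonal_mul_transpose (hpq : p ≤ q) (R : Matrix (Fin p) (Fin p) ℝ)
    {S : Matrix (Fin q) (Fin q) ℝ} (hS : Sᵀ * S = 1) (v w : Fin p → ℝ) :
    R * rectDiagonal q v * Sᵀ * (R * rectDiagonal q w * Sᵀ)ᵀ = R * diagonal (v * w) * Rᵀ := by
  calc R * rectDiagonal q v * Sᵀ * (R * rectDiagonal q w * Sᵀ)ᵀ
      = R * (rectDiagonal q v * (Sᵀ * S) * (rectDiagonal q w)ᵀ) * Rᵀ := by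
        simp only [transpose_mul, transpose_transpose, Matrix.mul_assoc]
    _ = R * diagonal (v * w) * Rᵀ := by
        rw [hS, Matrix.mul_one, rectDiagonal_mul_transpose hpq]

theorem nuclearNorm_conj_rectDiagonal (hpq : p ≤ q) {R : Matrix (Fin p) (Fin p) ℝ}
    (hR : Rᵀ * R = 1) {S : Matrix (Fin q) (Fin q) ℝ} (hS : Sᵀ * S = 1) {v : Fin p → ℝ}
    (hv : ∀ i, 0 ≤ v i) :
    nuclearNorm (R * rectDiagonal q v * Sᵀ) = ∑ i, v i := by
  unfold nuclearNorm
  rw [IsHermitian.sum_comp_eigenvalues_of_eq_conj_diagonal _ hR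
    (by rw [conjTranspose_eq_transpose_of_trivial, conj_rectDiagonal_mul_transpose hpq R hS])]
  exact Finset.sum_congr rfl fun i _ => Real.sqrt_mul_self (hv i)

theorem trace_conj_rectDiagonal_mul_transpose (hpq : p ≤ q) {R : Matrix (Fin p) (Fin p) ℝ}
    (hR : Rᵀ * R = 1) {S : Matrix (Fin q) (Fin q) ℝ} (hS : Sᵀ * S = 1) (v w : Fin p → ℝ) :
    trace (R * rectDiagonal q v * Sᵀ * (R * rectDiagonal q w * Sᵀ)ᵀ) = ∑ i, v i * w i := by
  rw [conj_rectDiagonal_mul_transpose hpq R hS, trace_mul_cycle, hR, one_mul, trace_diagonal]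
  rfl

theorem dotProduct_self_transpose_conj_rectDiagonal_mulVec_le (hpq : p ≤ q)
    {R : Matrix (Fin p) (Fin p) ℝ} (hR : R * Rᵀ = 1) {S : Matrix (Fin q) (Fin q) ℝ}
    (hS : Sᵀ * S = 1) {g : Fin p → ℝ}
    (hg : ∀ i, g i ^ 2 ≤ 1) (x : Fin p → ℝ) :
    ((R * rectDiagonal q g * Sᵀ)ᵀ *ᵥ x) ⬝ᵥ ((R * rectDiagonal q g * Sᵀ)ᵀ *ᵥ x) ≤ x ⬝ᵥ x := by
  rw [← dotProduct_mul_transpose_mulVec, conj_rectDiagonal_mul_transpose hpq R hS]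
  calc x ⬝ᵥ (R * diagonal (g * g) * Rᵀ) *ᵥ x = ∑ i, g i ^ 2 * (Rᵀ *ᵥ x) i ^ 2 := by
        rw [dotProduct_mul_transpose_mulVec, transpose_mul, diagonal_transpose, ← mulVec_mulVec]
        simp only [dotProduct, mulVec_diagonal, Pi.mul_apply]
        ring_nf
    _ ≤ ∑ i, (Rᵀ *ᵥ x) i ^ 2 := Finset.sum_le_sum fun i _ =>
        mul_le_of_le_one_left (sq_nonneg _) (hg i)
    _ = (Rᵀ *ᵥ x) ⬝ᵥ (Rᵀ *ᵥ x) := by simp only [dotProduct, sq]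
    _ = x ⬝ᵥ x := by rw [← dotProduct_mul_transpose_mulVec, hR, one_mulVec]

end rectDiagonal

section frobNorm

variable {p q : ℕ}

theorem frobNorm_sq (X : Matrix (Fin p) (Fin q) ℝ) : frobNorm X ^ 2 = trace (X * Xᵀ) := by
  rw [frobNorm, Real.sq_sqrt (by positivity)]
  simp [trace, mul_apply, sq]

theorem eq_of_frobNorm_sub_sq_nonpos {X Y : Matrix (Fin p) (Fin q) ℝ}
    (h : frobNorm (X - Y) ^ 2 ≤ 0) : X = Y := by
  rw [← sub_eq_zero, ← trace_mul_conjTranspose_self_eq_zero_iff,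
    conjTranspose_eq_transpose_of_trivial, ← frobNorm_sq]
  exact le_antisymm h (sq_nonneg _)

theorem add_half_frobNorm_sq_le_of_subgradient {f : Matrix (Fin p) (Fin q) ℝ → ℝ}
    {A Y₀ : Matrix (Fin p) (Fin q) ℝ} (hsub : ∀ Y, trace (Y * (A - Y₀)ᵀ) ≤ f Y)
    (hY₀ : trace (Y₀ * (A - Y₀)ᵀ) = f Y₀) (Y : Matrix (Fin p) (Fin q) ℝ) :
    f Y₀ + 1 / 2 * frobNorm (Y₀ - A) ^ 2 + 1 / 2 * frobNorm (Y - Y₀) ^ 2 ≤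
      f Y + 1 / 2 * frobNorm (Y - A) ^ 2 := by
  have hexpand := trace_sub_mul_transpose_sub (Y - Y₀) (A - Y₀)
  rw [sub_sub_sub_cancel_right, Matrix.sub_mul Y Y₀ (A - Y₀)ᵀ, trace_sub] at hexpand
  rw [frobNorm_sq, frobNorm_sq, frobNorm_sq, hexpand, ← neg_sub A, transpose_neg, Matrix.neg_mul,
    Matrix.mul_neg, neg_neg]
  linarith [hsub Y]

end frobNorm

theorem stmt12_general (p q : ℕ) (hpq : p ≤ q)
    (R : Matrix (Fin p) (Fin p) ℝ) (hR1 : R * Rᵀ = 1) (hR2 : Rᵀ * R = 1)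
    (S : Matrix (Fin q) (Fin q) ℝ) (hS2 : Sᵀ * S = 1)
    (σs : Fin p → ℝ)
    (hnonneg : ∀ i, 0 ≤ σs i)
    (A : Matrix (Fin p) (Fin q) ℝ)
    (hA : A = R * Matrix.of (fun (i : Fin p) (j : Fin q) =>
        if (i : ℕ) = (j : ℕ) then σs i else 0) * Sᵀ) :
    (∀ Y : Matrix (Fin p) (Fin q) ℝ,
      nuclearNorm (R * Matrix.of (fun (i : Fin p) (j : Fin q) =>
          if (i : ℕ) = (j : ℕ) then max (σs i - 1) 0 else 0) * Sᵀ) +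
        (1 / 2) * frobNorm ((R * Matrix.of (fun (i : Fin p) (j : Fin q) =>
          if (i : ℕ) = (j : ℕ) then max (σs i - 1) 0 else 0) * Sᵀ) - A) ^ 2 ≤
      nuclearNorm Y + (1 / 2) * frobNorm (Y - A) ^ 2) ∧
    ∀ Y : Matrix (Fin p) (Fin q) ℝ,
      nuclearNorm Y + (1 / 2) * frobNorm (Y - A) ^ 2 ≤
        nuclearNorm (R * Matrix.of (fun (i : Fin p) (j : Fin q) =>
          if (i : ℕ) = (j : ℕ) then max (σs i - 1) 0 else 0) * Sᵀ) +
          (1 / 2) * frobNorm ((R * Matrix.of (fun (i : Fin p) (j : Fin q) =>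
            if (i : ℕ) = (j : ℕ) then max (σs i - 1) 0 else 0) * Sᵀ) - A) ^ 2 →
      Y = R * Matrix.of (fun (i : Fin p) (j : Fin q) =>
          if (i : ℕ) = (j : ℕ) then max (σs i - 1) 0 else 0) * Sᵀ := by
  set h : Fin p → ℝ := fun i => max (σs i - 1) 0
  set Y₀ := R * Matrix.of (fun (i : Fin p) (j : Fin q) => if (i : ℕ) = j then h i else 0) * Sᵀ
  have hY₀ : Y₀ = R * rectDiagonal q h * Sᵀ := rfl
  have hG : A - Y₀ = R * rectDiagonal q (σs - h) * Sᵀ := by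
    rw [hA, hY₀, ← Matrix.sub_mul, ← Matrix.mul_sub, ← rectDiagonal_sub]
    rfl
  have hg (i : Fin p) : (σs i - h i) ^ 2 ≤ 1 := by
    rcases le_total (σs i) 1 with hσ | hσ
    · rw [show h i = 0 from max_eq_right (by linarith)]
      nlinarith [hnonneg i]
    · rw [show h i = σs i - 1 from max_eq_left (by linarith)]
      norm_num
  have hhg (i : Fin p) : h i * (σs i - h i) = h i := by
    rcases le_total (σs i) 1 with hσ | hσ
    · rw [show h i = 0 from max_eq_right (by linarith), zero_mul]
    · rw [show h i = σs i - 1 from max_eq_left (by linarith), sub_sub_cancel, mul_one]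
  have hsub (Y : Matrix (Fin p) (Fin q) ℝ) : trace (Y * (A - Y₀)ᵀ) ≤ nuclearNorm Y :=
    hG ▸ trace_mul_transpose_le_nuclearNorm
      (dotProduct_self_transpose_conj_rectDiagonal_mulVec_le hpq hR1 hS2 hg) Y
  have hsubY₀ : trace (Y₀ * (A - Y₀)ᵀ) = nuclearNorm Y₀ := by
    rw [hG, hY₀, trace_conj_rectDiagonal_mul_transpose hpq hR2 hS2,
      nuclearNorm_conj_rectDiagonal hpq hR2 hS2 (fun i => le_max_right _ _)]
    exact Finset.sum_congr rfl fun i _ => hhg i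
  have hopt := add_half_frobNorm_sq_le_of_subgradient hsub hsubY₀
  exact ⟨fun Y => by linarith [hopt Y, sq_nonneg (frobNorm (Y - Y₀))],
    fun Y hY => eq_of_frobNorm_sub_sq_nonpos (by linarith [hopt Y])⟩

/-- the proximal mapping of the nuclear norm.  If
`A = R [Σ 0] Sᵀ` is an SVD of `A` and `h(t) = max{t−1,0}`, then `R [Σ_h 0] Sᵀ` is the
unique minimizer of `Y ↦ ‖Y‖_* + ½‖Y − A‖_F²`. -/
theorem stmt12 (p q : ℕ) (hp : 0 < p) (hpq : p ≤ q)
    (R : Matrix (Fin p) (Fin p) ℝ) (hR1 : R * Rᵀ = 1) (hR2 : Rᵀ * R = 1)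
    (S : Matrix (Fin q) (Fin q) ℝ) (hS1 : S * Sᵀ = 1) (hS2 : Sᵀ * S = 1)
    (σs : Fin p → ℝ) (hmono : ∀ i j : Fin p, i ≤ j → σs j ≤ σs i)
    (hnonneg : ∀ i, 0 ≤ σs i)
    (A : Matrix (Fin p) (Fin q) ℝ)
    (hA : A = R * Matrix.of (fun (i : Fin p) (j : Fin q) =>
        if (i : ℕ) = (j : ℕ) then σs i else 0) * Sᵀ) :
    (∀ Y : Matrix (Fin p) (Fin q) ℝ,
      nuclearNorm (R * Matrix.of (fun (i : Fin p) (j : Fin q) =>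
          if (i : ℕ) = (j : ℕ) then max (σs i - 1) 0 else 0) * Sᵀ) +
        (1 / 2) * frobNorm ((R * Matrix.of (fun (i : Fin p) (j : Fin q) =>
          if (i : ℕ) = (j : ℕ) then max (σs i - 1) 0 else 0) * Sᵀ) - A) ^ 2 ≤
      nuclearNorm Y + (1 / 2) * frobNorm (Y - A) ^ 2) ∧
    ∀ Y : Matrix (Fin p) (Fin q) ℝ,
      nuclearNorm Y + (1 / 2) * frobNorm (Y - A) ^ 2 ≤
        nuclearNorm (R * Matrix.of (fun (i : Fin p) (j : Fin q) =>
          if (i : ℕ) = (j : ℕ) then max (σs i - 1) 0 else 0) * Sᵀ) +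
          (1 / 2) * frobNorm ((R * Matrix.of (fun (i : Fin p) (j : Fin q) =>
            if (i : ℕ) = (j : ℕ) then max (σs i - 1) 0 else 0) * Sᵀ) - A) ^ 2 →
      Y = R * Matrix.of (fun (i : Fin p) (j : Fin q) =>
          if (i : ℕ) = (j : ℕ) then max (σs i - 1) 0 else 0) * Sᵀ :=
  stmt12_general p q hpq R hR1 hR2 S hS2 σs hnonneg A hA
end
end

section
/- Let r: ℝ^m → ℝ ∪ {∞} be proper lsc convex with x̄ ∈ dom r, ū ∈ ∂r(x̄), σ > 0. Then for any v, d ∈ ℝ^m: v ∈ D*Prox_{σ r*}(ū + σx̄)(d) (limiting coderivative of the prox of the conjugate at ū + σx̄, noting Prox_{σr*}(ū+σx̄) = ū) if and only if v − d ∈ D*Prox_r(x̄+ū)(−d − (σ−1)v). -/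
/-!
The invertible linear map `B (z, x) = (z + (σ - 1) • x, z - x)` carries the graph of
`Prox_r = (I + ∂r)⁻¹` onto the graph of `Prox_{σr*} = (I + σ∂r*)⁻¹`, because `∂r* = (∂r)⁻¹`.
The latter rests on the Fenchel–Moreau identity `r** = r`, obtained by separating points from
the closed convex epigraph of `r`. Regular, hence limiting, normal cones are transported by a
linear isomorphism through its adjoint: `q ∈ N_{B G}(B p) ↔ B* q ∈ N_G(p)`. Here
`B* (q₁, q₂) = (q₁ + q₂, (σ - 1) • q₁ - q₂)`, and `B* (v, -d) = (v - d, d + (σ - 1) • v)`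
is the claimed correspondence between the two coderivatives.
-/

open Filter

noncomputable section

variable {E F : Type*} [NormedAddCommGroup E] [InnerProductSpace ℝ E]
  [NormedAddCommGroup F] [InnerProductSpace ℝ F]

/-- Regular (Fréchet) normal cone: the polar of the tangent cone. -/
def regNormalP (C : Set (E × F)) (p : E × F) : Set (E × F) :=
  {q | ∀ w ∈ tangentConeB C p, (inner ℝ q.1 w.1 : ℝ) + (inner ℝ q.2 w.2 : ℝ) ≤ 0}

/-- Limiting (Mordukhovich) normal cone: outer limit of regular normal cones. -/
def limNormalP (C : Set (E × F)) (p : E × F) : Set (E × F) :=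
  {q | ∃ pk qk : ℕ → E × F, (∀ k, pk k ∈ C) ∧ Tendsto pk atTop (nhds p) ∧
    (∀ k, qk k ∈ regNormalP C (pk k)) ∧ Tendsto qk atTop (nhds q)}

/-- Limiting coderivative of the mapping whose graph is `G`:
`z ∈ D*(x,u)(w) ⟺ (z, −w) ∈ N_G(x,u)`. -/
def coderivG (G : Set (E × F)) (p : E × F) (w : F) : Set E :=
  {z | (z, -w) ∈ limNormalP G p}

/-- Fenchel conjugate of an extended-real-valued function. -/
def fenchelConj {m : ℕ} (r : EuclideanSpace ℝ (Fin m) → EReal)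
    (u : EuclideanSpace ℝ (Fin m)) : EReal :=
  ⨆ x, (((inner ℝ u x : ℝ) : EReal) - r x)

def IsProperFn {X : Type*} (f : X → EReal) : Prop := (∃ x, f x ≠ ⊤) ∧ ∀ x, f x ≠ ⊥

def IsConvexFn {X : Type*} [AddCommMonoid X] [Module ℝ X] (f : X → EReal) : Prop :=
  ∀ x y : X, ∀ a b : ℝ, 0 ≤ a → 0 ≤ b → a + b = 1 →
    f (a • x + b • y) ≤ (a : EReal) * f x + (b : EReal) * f y

def epigraph {X : Type*} (f : X → EReal) : Set (X × ℝ) := {p | f p.1 ≤ p.2}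

def IsAffineMinorant (f : E → EReal) (u : E) (M : ℝ) : Prop :=
  ∀ y, ((inner ℝ u y - M : ℝ) : EReal) ≤ f y

theorem IsConvexFn.convex_epigraph {X : Type*} [AddCommGroup X] [Module ℝ X] {f : X → EReal}
    (hf : IsConvexFn f) : Convex ℝ (epigraph f) := by
  rintro p hp q hq a b ha hb hab
  calc f (a • p.1 + b • q.1) ≤ (a : EReal) * f p.1 + (b : EReal) * f q.1 :=
        hf p.1 q.1 a b ha hb hab
    _ ≤ (a : EReal) * p.2 + (b : EReal) * q.2 :=
        add_le_add (mul_le_mul_of_nonneg_left hp (EReal.coe_nonneg.2 ha))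
          (mul_le_mul_of_nonneg_left hq (EReal.coe_nonneg.2 hb))
    _ = ((a * p.2 + b * q.2 : ℝ) : EReal) := by push_cast; rfl

theorem LowerSemicontinuous.isClosed_epigraph_real {X : Type*} [TopologicalSpace X]
    {f : X → EReal} (hf : LowerSemicontinuous f) : IsClosed (epigraph f) :=
  hf.isClosed_epigraph.preimage (continuous_id.prodMap continuous_coe_real_ereal)

theorem exists_forall_mem_epigraph {X : Type*} {f : X → EReal} (hf : ∃ x, f x ≠ ⊤) :
    ∃ x a, ∀ t ≥ a, (x, t) ∈ epigraph f := by
  obtain ⟨x, hx⟩ := hf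
  exact ⟨x, (f x).toReal, fun t ht =>
    (EReal.le_coe_toReal hx).trans (EReal.coe_le_coe_iff.2 ht)⟩

theorem isAffineMinorant_iff {f : E → EReal} {u : E} {M : ℝ} :
    IsAffineMinorant f u M ↔ ∀ p ∈ epigraph f, inner ℝ u p.1 - M ≤ p.2 := by
  refine ⟨fun h p hp => EReal.coe_le_coe_iff.1 ((h p.1).trans hp), fun h y => ?_⟩
  by_contra! hlt
  obtain ⟨t, hyt, htM⟩ := EReal.exists_between_coe_real hlt
  exact (EReal.coe_lt_coe_iff.1 htM).not_ge (h (y, t) hyt.le)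

theorem exists_separation_epigraph [CompleteSpace E] {f : E → EReal} (hf : ∃ x, f x ≠ ⊤)
    (hconv : IsConvexFn f) (hlsc : LowerSemicontinuous f) {x : E} {α : ℝ}
    (hα : (α : EReal) < f x) :
    ∃ (u : E) (s c : ℝ), 0 ≤ s ∧ inner ℝ u x + α * s < c ∧
      ∀ p ∈ epigraph f, c < inner ℝ u p.1 + p.2 * s := by
  obtain ⟨φ, c, hφx, hφ⟩ := geometric_hahn_banach_point_closed hconv.convex_epigraph
    hlsc.isClosed_epigraph_real (x := (x, α)) hα.not_ge
  set u := (InnerProductSpace.toDual ℝ E).symm (φ.comp (.inl ℝ E ℝ))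
  set s := φ (0, 1)
  have hφ_apply : ∀ p : E × ℝ, φ p = inner ℝ u p.1 + p.2 * s := by
    rintro ⟨y, t⟩
    calc φ (y, t) = φ ((y, 0) + t • (0, 1)) := by simp
      _ = inner ℝ u y + t * s := by
        rw [map_add, map_smul, smul_eq_mul, InnerProductSpace.toDual_symm_apply, mul_comm]
        rfl
  clear_value u s
  simp only [hφ_apply] at hφx hφ
  refine ⟨u, s, c, ?_, hφx, hφ⟩
  obtain ⟨x₀, a, hx₀⟩ := exists_forall_mem_epigraph hf
  by_contra! hneg
  set t := max a ((c - inner ℝ u x₀) / s)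
  have h₁ := hφ (x₀, t) (hx₀ t (le_max_left _ _))
  have h₂ : t * s ≤ c - inner ℝ u x₀ :=
    (div_le_iff_of_neg hneg).1 (le_max_right _ _)
  dsimp only at h₁
  linarith

theorem isAffineMinorant_of_separation {f : E → EReal} {u : E} {s c : ℝ} (hs : 0 < s)
    (hsep : ∀ p ∈ epigraph f, c < inner ℝ u p.1 + p.2 * s) :
    IsAffineMinorant f (-s⁻¹ • u) (-c / s) := by
  refine isAffineMinorant_iff.2 fun p hp => ?_
  have := hsep p hp
  rw [real_inner_smul_left]
  field_simp
  linarith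

theorem exists_isAffineMinorant [CompleteSpace E] {f : E → EReal} (hf : IsProperFn f)
    (hconv : IsConvexFn f) (hlsc : LowerSemicontinuous f) : ∃ u M, IsAffineMinorant f u M := by
  obtain ⟨x, hx⟩ := hf.1
  obtain ⟨a, hfx⟩ : ∃ a : ℝ, f x = a := ⟨_, (EReal.coe_toReal hx (hf.2 x)).symm⟩
  obtain ⟨u, s, c, hs₀, hx_lt, hsep⟩ := exists_separation_epigraph hf.1 hconv hlsc
    (α := a - 1) (by rw [hfx]; exact_mod_cast sub_one_lt a)
  have hs : 0 < s := by
    refine hs₀.lt_of_ne fun h => ?_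
    have := hsep (x, a) hfx.le
    subst h
    simp only [mul_zero, add_zero] at this hx_lt
    linarith
  exact ⟨_, _, isAffineMinorant_of_separation hs hsep⟩

theorem exists_isAffineMinorant_gt [CompleteSpace E] {f : E → EReal} (hf : IsProperFn f)
    (hconv : IsConvexFn f) (hlsc : LowerSemicontinuous f) {x : E} {α : ℝ}
    (hα : (α : EReal) < f x) :
    ∃ u M, IsAffineMinorant f u M ∧ α < inner ℝ u x - M := by
  obtain ⟨u, s, c, hs₀, hx_lt, hsep⟩ := exists_separation_epigraph hf.1 hconv hlsc hα
  rcases hs₀.lt_or_eq with hs | rfl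
  · refine ⟨_, _, isAffineMinorant_of_separation hs hsep, ?_⟩
    rw [real_inner_smul_left]
    field_simp
    linarith
  -- A vertical separating hyperplane: tilt a global affine minorant along it.
  obtain ⟨u₁, β, h₁⟩ := exists_isAffineMinorant hf hconv hlsc
  simp only [mul_zero, add_zero] at hx_lt hsep
  have hgap : 0 < c - inner ℝ u x := sub_pos.2 hx_lt
  set k := (|α - inner ℝ u₁ x + β| + 1) / (c - inner ℝ u x)
  have hk : 0 ≤ k := by positivity
  refine ⟨u₁ - k • u, β - k * c, isAffineMinorant_iff.2 fun p hp => ?_, ?_⟩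
  · have h₁p := isAffineMinorant_iff.1 h₁ p hp
    have := mul_le_mul_of_nonneg_left (hsep p hp).le hk
    rw [inner_sub_left, real_inner_smul_left]
    linarith
  · have hkx : k * (c - inner ℝ u x) = |α - inner ℝ u₁ x + β| + 1 := div_mul_cancel₀ _ hgap.ne'
    rw [inner_sub_left, real_inner_smul_left]
    linarith [le_abs_self (α - inner ℝ u₁ x + β)]

section Conjugate

variable {m : ℕ} {f : EuclideanSpace ℝ (Fin m) → EReal}

theorem le_fenchelConj (u y : EuclideanSpace ℝ (Fin m)) :
    ((inner ℝ u y : ℝ) : EReal) - f y ≤ fenchelConj f u :=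
  le_iSup (fun x => ((inner ℝ u x : ℝ) : EReal) - f x) y

theorem fenchelConj_le_of_isAffineMinorant {u : EuclideanSpace ℝ (Fin m)} {M : ℝ}
    (h : IsAffineMinorant f u M) : fenchelConj f u ≤ M :=
  iSup_le fun y => by
    have hy := h y
    rw [EReal.coe_sub, EReal.sub_le_iff_le_add (.inl (EReal.coe_ne_bot M))
      (.inl (EReal.coe_ne_top M))] at hy
    rwa [EReal.sub_le_iff_le_add (.inr (EReal.coe_ne_top M)) (.inr (EReal.coe_ne_bot M)),
      add_comm]

theorem le_fenchelConj_fenchelConj_of_isAffineMinorant {u : EuclideanSpace ℝ (Fin m)} {M : ℝ}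
    (h : IsAffineMinorant f u M) (x : EuclideanSpace ℝ (Fin m)) :
    ((inner ℝ u x - M : ℝ) : EReal) ≤ fenchelConj (fenchelConj f) x :=
  calc ((inner ℝ u x - M : ℝ) : EReal) ≤ ((inner ℝ x u : ℝ) : EReal) - fenchelConj f u := by
        rw [EReal.coe_sub, real_inner_comm]
        exact EReal.sub_le_sub le_rfl (fenchelConj_le_of_isAffineMinorant h)
    _ ≤ fenchelConj (fenchelConj f) x := le_fenchelConj x u

theorem isAffineMinorant_fenchelConj {y : EuclideanSpace ℝ (Fin m)} {a : ℝ} (h : f y = a) :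
    IsAffineMinorant (fenchelConj f) y a := fun u => by
  rw [EReal.coe_sub, real_inner_comm, ← h]
  exact le_fenchelConj u y

theorem fenchelConj_fenchelConj_le (hf : ∀ x, f x ≠ ⊥) (y : EuclideanSpace ℝ (Fin m)) :
    fenchelConj (fenchelConj f) y ≤ f y := by
  by_cases hy : f y = ⊤
  · exact hy ▸ le_top
  · obtain ⟨a, hfy⟩ : ∃ a : ℝ, f y = a := ⟨_, (EReal.coe_toReal hy (hf y)).symm⟩
    exact hfy ▸ fenchelConj_le_of_isAffineMinorant (isAffineMinorant_fenchelConj hfy)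

theorem fenchelConj_fenchelConj (hf : IsProperFn f) (hconv : IsConvexFn f)
    (hlsc : LowerSemicontinuous f) : fenchelConj (fenchelConj f) = f := by
  refine funext fun x => le_antisymm (fenchelConj_fenchelConj_le hf.2 x) ?_
  by_contra! hlt
  obtain ⟨α, hα_lt, hα_gt⟩ := EReal.exists_between_coe_real hlt
  obtain ⟨u, M, hM, hαx⟩ := exists_isAffineMinorant_gt hf hconv hlsc hα_gt
  exact (le_fenchelConj_fenchelConj_of_isAffineMinorant hM x).not_gt
    (hα_lt.trans (EReal.coe_lt_coe_iff.2 hαx))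

theorem IsProperFn.fenchelConj (hf : IsProperFn f) (hconv : IsConvexFn f)
    (hlsc : LowerSemicontinuous f) : IsProperFn (fenchelConj f) := by
  obtain ⟨u, M, hM⟩ := exists_isAffineMinorant hf hconv hlsc
  refine ⟨⟨u, ne_top_of_le_ne_top (EReal.coe_ne_top M) (fenchelConj_le_of_isAffineMinorant hM)⟩,
    fun v => ?_⟩
  obtain ⟨x, hx⟩ := hf.1
  obtain ⟨a, hfx⟩ : ∃ a : ℝ, f x = a := ⟨_, (EReal.coe_toReal hx (hf.2 x)).symm⟩
  have := le_fenchelConj (f := f) v x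
  rw [hfx, ← EReal.coe_sub] at this
  exact ne_bot_of_le_ne_bot (EReal.coe_ne_bot _) this

theorem ne_top_of_mem_subdiffFn (hf : ∃ y, f y ≠ ⊤) {x u : EuclideanSpace ℝ (Fin m)}
    (hu : u ∈ subdiffFn f x) : f x ≠ ⊤ := by
  obtain ⟨y, hy⟩ := hf
  intro hx
  have := hu y
  rw [hx, EReal.top_add_of_ne_bot (EReal.coe_ne_bot _), top_le_iff] at this
  exact hy this

theorem isAffineMinorant_of_mem_subdiffFn {x u : EuclideanSpace ℝ (Fin m)} {a : ℝ}
    (hx : f x = a) (hu : u ∈ subdiffFn f x) : IsAffineMinorant f u (inner ℝ u x - a) :=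
  fun y => by
    convert hu y using 1
    rw [hx, ← EReal.coe_add, inner_sub_right]
    ring_nf

theorem fenchelConj_eq_of_mem_subdiffFn {x u : EuclideanSpace ℝ (Fin m)} {a : ℝ}
    (hx : f x = a) (hu : u ∈ subdiffFn f x) : fenchelConj f u = ((inner ℝ u x - a : ℝ) : EReal) :=
  le_antisymm (fenchelConj_le_of_isAffineMinorant (isAffineMinorant_of_mem_subdiffFn hx hu))
    (by rw [EReal.coe_sub, ← hx]; exact le_fenchelConj u x)

theorem mem_subdiffFn_fenchelConj (hf : IsProperFn f) {x u : EuclideanSpace ℝ (Fin m)}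
    (hu : u ∈ subdiffFn f x) : x ∈ subdiffFn (fenchelConj f) u := fun v => by
  obtain ⟨a, hx⟩ : ∃ a : ℝ, f x = a :=
    ⟨_, (EReal.coe_toReal (ne_top_of_mem_subdiffFn hf.1 hu) (hf.2 x)).symm⟩
  calc fenchelConj f u + ((inner ℝ x (v - u) : ℝ) : EReal)
      = ((inner ℝ v x : ℝ) : EReal) - f x := by
        rw [fenchelConj_eq_of_mem_subdiffFn hx hu, hx, ← EReal.coe_add, ← EReal.coe_sub,
          inner_sub_right, real_inner_comm x v, real_inner_comm x u]
        ring_nf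
    _ ≤ fenchelConj f v := le_fenchelConj v x

theorem mem_subdiffFn_fenchelConj_iff (hf : IsProperFn f) (hconv : IsConvexFn f)
    (hlsc : LowerSemicontinuous f) {x u : EuclideanSpace ℝ (Fin m)} :
    x ∈ subdiffFn (fenchelConj f) u ↔ u ∈ subdiffFn f x := by
  refine ⟨fun hx => ?_, mem_subdiffFn_fenchelConj hf⟩
  simpa only [fenchelConj_fenchelConj hf hconv hlsc] using
    mem_subdiffFn_fenchelConj (hf.fenchelConj hconv hlsc) hx

end Conjugate

section NormalCone

variable {E' F' : Type*} [NormedAddCommGroup E'] [InnerProductSpace ℝ E']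
  [NormedAddCommGroup F'] [InnerProductSpace ℝ F']

def IsAdjointPair (B : E × F → E' × F') (B' : E' × F' → E × F) : Prop :=
  ∀ q p, inner ℝ q.1 (B p).1 + inner ℝ q.2 (B p).2 = inner ℝ (B' q).1 p.1 + inner ℝ (B' q).2 p.2

theorem IsAdjointPair.symm {B : (E × F) ≃L[ℝ] (E' × F')} {B' : (E' × F') ≃L[ℝ] (E × F)}
    (h : IsAdjointPair B B') : IsAdjointPair B.symm B'.symm := fun q p => by
  simpa only [B.apply_symm_apply, B'.apply_symm_apply] using (h (B'.symm q) (B.symm p)).symm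

theorem map_mem_tangentConeB_image {X Y : Type*} [NormedAddCommGroup X] [NormedSpace ℝ X]
    [NormedAddCommGroup Y] [NormedSpace ℝ Y] (B : X →L[ℝ] Y) {C : Set X} {x w : X}
    (hw : w ∈ tangentConeB C x) : B w ∈ tangentConeB (B '' C) (B x) := by
  obtain ⟨t, c, ht, ht0, hc, hlim⟩ := hw
  refine ⟨t, fun k => B (c k), ht, ht0, fun k => ⟨c k, hc k, rfl⟩, ?_⟩
  simpa only [Function.comp_def, map_sub, map_smul] using (B.continuous.tendsto w).comp hlim

theorem regNormalP_image_iff {B : (E × F) ≃L[ℝ] (E' × F')} {B' : (E' × F') ≃L[ℝ] (E × F)}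
    (hB : IsAdjointPair B B') (C : Set (E × F)) (p : E × F) (q : E' × F') :
    q ∈ regNormalP (B '' C) (B p) ↔ B' q ∈ regNormalP C p := by
  refine ⟨fun hq w hw => ?_, fun hq w hw => ?_⟩
  · rw [← hB]
    exact hq _ (map_mem_tangentConeB_image (B : (E × F) →L[ℝ] (E' × F')) hw)
  · have hw' := map_mem_tangentConeB_image (B.symm : (E' × F') →L[ℝ] (E × F)) hw
    simp only [ContinuousLinearEquiv.coe_coe, Set.image_image, B.symm_apply_apply,
      Set.image_id'] at hw'
    have := hq _ hw'
    rwa [← hB, B.apply_symm_apply] at this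

theorem mem_limNormalP_of_mem_image {B : (E × F) ≃L[ℝ] (E' × F')}
    {B' : (E' × F') ≃L[ℝ] (E × F)} (hB : IsAdjointPair B B') {C : Set (E × F)} {p : E × F}
    {q : E' × F'} (hq : q ∈ limNormalP (B '' C) (B p)) : B' q ∈ limNormalP C p := by
  obtain ⟨pk, qk, hpk, hpl, hqk, hql⟩ := hq
  refine ⟨fun k => B.symm (pk k), fun k => B' (qk k), fun k => ?_, ?_, fun k => ?_,
    (B'.continuous.tendsto _).comp hql⟩
  · obtain ⟨c, hc, hce⟩ := hpk k
    simpa [← hce] using hc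
  · simpa [Function.comp_def] using (B.symm.continuous.tendsto _).comp hpl
  · refine (regNormalP_image_iff hB C _ _).1 ?_
    simpa using hqk k

theorem limNormalP_image_iff {B : (E × F) ≃L[ℝ] (E' × F')} {B' : (E' × F') ≃L[ℝ] (E × F)}
    (hB : IsAdjointPair B B') (C : Set (E × F)) (p : E × F) (q : E' × F') :
    q ∈ limNormalP (B '' C) (B p) ↔ B' q ∈ limNormalP C p := by
  refine ⟨mem_limNormalP_of_mem_image hB, fun h => ?_⟩
  simpa using mem_limNormalP_of_mem_image hB.symm (C := B '' C) (p := B p) (q := B' q)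
    (by simpa [Set.image_image] using h)

end NormalCone

section ProxShear

variable {V : Type*} [NormedAddCommGroup V]

open ContinuousLinearMap in
def proxShear [NormedSpace ℝ V] {σ : ℝ} (hσ : σ ≠ 0) : (V × V) ≃L[ℝ] (V × V) :=
  .equivOfInverse
    ((fst ℝ V V + (σ - 1) • snd ℝ V V).prod (fst ℝ V V - snd ℝ V V))
    ((snd ℝ V V + σ⁻¹ • (fst ℝ V V - snd ℝ V V)).prod (σ⁻¹ • (fst ℝ V V - snd ℝ V V)))
    (fun p => by
      ext <;> simp only [prod_apply, add_apply, sub_apply, smul_apply, coe_fst', coe_snd'] <;>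
        match_scalars <;> field_simp <;> ring)
    (fun q => by
      ext <;> simp only [prod_apply, add_apply, sub_apply, smul_apply, coe_fst', coe_snd'] <;>
        match_scalars <;> field_simp <;> ring)

open ContinuousLinearMap in
def proxShearAdjoint [NormedSpace ℝ V] {σ : ℝ} (hσ : σ ≠ 0) : (V × V) ≃L[ℝ] (V × V) :=
  .equivOfInverse
    ((fst ℝ V V + snd ℝ V V).prod ((σ - 1) • fst ℝ V V - snd ℝ V V))
    ((σ⁻¹ • (fst ℝ V V + snd ℝ V V)).prod (fst ℝ V V - σ⁻¹ • (fst ℝ V V + snd ℝ V V)))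
    (fun p => by
      ext <;> simp only [prod_apply, add_apply, sub_apply, smul_apply, coe_fst', coe_snd'] <;>
        match_scalars <;> field_simp <;> ring)
    (fun q => by
      ext <;> simp only [prod_apply, add_apply, sub_apply, smul_apply, coe_fst', coe_snd'] <;>
        match_scalars <;> field_simp <;> ring)

theorem proxShear_apply [NormedSpace ℝ V] {σ : ℝ} (hσ : σ ≠ 0) (p : V × V) :
    proxShear hσ p = (p.1 + (σ - 1) • p.2, p.1 - p.2) := rfl

theorem proxShearAdjoint_apply [NormedSpace ℝ V] {σ : ℝ} (hσ : σ ≠ 0) (q : V × V) :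
    proxShearAdjoint hσ q = (q.1 + q.2, (σ - 1) • q.1 - q.2) := rfl

theorem isAdjointPair_proxShear [InnerProductSpace ℝ V] {σ : ℝ} (hσ : σ ≠ 0) :
    IsAdjointPair (proxShear (V := V) hσ) (proxShearAdjoint hσ) := fun q p => by
  simp only [proxShear_apply, proxShearAdjoint_apply, inner_add_left, inner_add_right,
    inner_sub_left, inner_sub_right, real_inner_smul_left, real_inner_smul_right]
  ring

end ProxShear

theorem proxShear_image_graph_prox {m : ℕ} {r : EuclideanSpace ℝ (Fin m) → EReal}
    (hr : IsProperFn r) (hconv : IsConvexFn r) (hlsc : LowerSemicontinuous r) {σ : ℝ}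
    (hσ : σ ≠ 0) :
    proxShear hσ '' {pp : EuclideanSpace ℝ (Fin m) × EuclideanSpace ℝ (Fin m) |
        pp.1 - pp.2 ∈ subdiffFn r pp.2} =
      {pp | ∃ w ∈ subdiffFn (fenchelConj r) pp.2, pp.1 - pp.2 = σ • w} := by
  ext ⟨y, u⟩
  constructor
  · rintro ⟨⟨z, x⟩, hzx, hB⟩
    rw [proxShear_apply, Prod.mk.injEq] at hB
    obtain ⟨rfl, rfl⟩ := hB
    exact ⟨x, (mem_subdiffFn_fenchelConj_iff hr hconv hlsc).2 hzx, by module⟩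
  · rintro ⟨w, hw, hyu⟩
    refine ⟨(u + w, w), by simpa using (mem_subdiffFn_fenchelConj_iff hr hconv hlsc).1 hw, ?_⟩
    obtain rfl : y = σ • w + u := eq_add_of_sub_eq hyu
    simp only [proxShear_apply, Prod.mk.injEq]
    constructor <;> module

theorem stmt14_general (m : ℕ) (r : EuclideanSpace ℝ (Fin m) → EReal)
    (hproper : (∃ x, r x ≠ ⊤) ∧ ∀ x, r x ≠ ⊥)
    (hlsc : LowerSemicontinuous r)
    (hconv : ∀ x y : EuclideanSpace ℝ (Fin m), ∀ a b : ℝ, 0 ≤ a → 0 ≤ b → a + b = 1 →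
      r (a • x + b • y) ≤ (a : EReal) * r x + (b : EReal) * r y)
    (xb ub : EuclideanSpace ℝ (Fin m))
    (σ : ℝ) (hσ : 0 < σ) (v d : EuclideanSpace ℝ (Fin m)) :
    v ∈ coderivG
        {pp : EuclideanSpace ℝ (Fin m) × EuclideanSpace ℝ (Fin m) |
          ∃ w ∈ subdiffFn (fenchelConj r) pp.2, pp.1 - pp.2 = σ • w}
        (ub + σ • xb, ub) d ↔
      v - d ∈ coderivG
        {pp : EuclideanSpace ℝ (Fin m) × EuclideanSpace ℝ (Fin m) |
          pp.1 - pp.2 ∈ subdiffFn r pp.2}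
        (xb + ub, xb) (-d - (σ - 1) • v) := by
  have hσ0 : σ ≠ 0 := hσ.ne'
  have hpoint : proxShear hσ0 (xb + ub, xb) = (ub + σ • xb, ub) := by
    simp only [proxShear_apply, Prod.mk.injEq]
    constructor <;> module
  have hdir : proxShearAdjoint hσ0 (v, -d) = (v - d, -(-d - (σ - 1) • v)) := by
    simp only [proxShearAdjoint_apply, Prod.mk.injEq]
    constructor <;> module
  simp only [coderivG, Set.mem_ofPred_eq]
  rw [← proxShear_image_graph_prox hproper hconv hlsc hσ0, ← hpoint,
    limNormalP_image_iff (isAdjointPair_proxShear hσ0), hdir]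

/-- for proper lsc convex `r`, `x̄ ∈ dom r`, `ū ∈ ∂r(x̄)`, `σ > 0`:
`v ∈ D*Prox_{σr*}(ū+σx̄)(d)` iff `v − d ∈ D*Prox_r(x̄+ū)(−d − (σ−1)v)`, where
`Prox_{σr*} = (I + σ∂r*)⁻¹` and `Prox_r = (I + ∂r)⁻¹`. -/
theorem stmt14 (m : ℕ) (r : EuclideanSpace ℝ (Fin m) → EReal)
    (hproper : (∃ x, r x ≠ ⊤) ∧ ∀ x, r x ≠ ⊥)
    (hlsc : LowerSemicontinuous r)
    (hconv : ∀ x y : EuclideanSpace ℝ (Fin m), ∀ a b : ℝ, 0 ≤ a → 0 ≤ b → a + b = 1 →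
      r (a • x + b • y) ≤ (a : EReal) * r x + (b : EReal) * r y)
    (xb ub : EuclideanSpace ℝ (Fin m)) (hdom : r xb ≠ ⊤) (hub : ub ∈ subdiffFn r xb)
    (σ : ℝ) (hσ : 0 < σ) (v d : EuclideanSpace ℝ (Fin m)) :
    v ∈ coderivG
        {pp : EuclideanSpace ℝ (Fin m) × EuclideanSpace ℝ (Fin m) |
          ∃ w ∈ subdiffFn (fenchelConj r) pp.2, pp.1 - pp.2 = σ • w}
        (ub + σ • xb, ub) d ↔
      v - d ∈ coderivG
        {pp : EuclideanSpace ℝ (Fin m) × EuclideanSpace ℝ (Fin m) |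
          pp.1 - pp.2 ∈ subdiffFn r pp.2}
        (xb + ub, xb) (-d - (σ - 1) • v) :=
  stmt14_general m r hproper hlsc hconv xb ub σ hσ v d
end
end
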